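/- arXiv:0708.1591 — 5 statements merged into one kernel-verified Lean document; each statement's English description precedes it below -/
import Mathlib

section
/- Let A and B be densely defined closed operators on a Hilbert space G with B ⊆ -A* and A ⊆ -B*. Let K be the orthogonal complement of D(B) in D(-A*) with respect to the graph inner product ⟨f,g⟩_{A*} = ⟨f,g⟩ + ⟨A*f, A*g⟩, and K' the orthogonal complement of D(A) in D(-B*) with respect to the graph inner product of B*. Then the restriction of A* to K is a unitary (isometric isomorphism for the graph inner products) from K onto K', with inverse the restriction of B* to K'. -/
/-!
If `p ∈ D(A†)` is graph-orthogonal to `D(B)`, then for `f ∈ D(B)` the relation `B f = -A† f`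
turns orthogonality into `⟪p, f⟫ = ⟪A† p, B f⟫`; hence `A† p ∈ D(B†)` and `B† A† p = p`.
This identity makes `A†` graph-isometric on `K`, and the roles of `A` and `B` are symmetric.
-/

namespace LinearPMap

variable {𝕜 E F : Type*} [RCLike 𝕜]
  [NormedAddCommGroup E] [InnerProductSpace 𝕜 E] [NormedAddCommGroup F] [InnerProductSpace 𝕜 F]

def graphOrthogonal (T : E →ₗ.[𝕜] F) (D : Submodule 𝕜 E) : Set E :=
  {p | ∃ hp : p ∈ T.domain, ∀ f ∈ D, ∀ hf : f ∈ T.domain,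
    inner 𝕜 p f + inner 𝕜 (T ⟨p, hp⟩) (T ⟨f, hf⟩) = 0}

theorem apply_eq_neg_of_le_neg {S T : E →ₗ.[𝕜] F} (h : S ≤ -T) (x : S.domain)
    (hx : (x : E) ∈ T.domain) : T ⟨x, hx⟩ = -S x := by
  rw [h.2 (x := x) (y := ⟨x, hx⟩) rfl, neg_apply, neg_neg]

variable {A : E →ₗ.[𝕜] F} {B : F →ₗ.[𝕜] E} [CompleteSpace E]

theorem inner_eq_inner_apply_of_mem_graphOrthogonal (hBA : B ≤ -A†) {p : F}
    (hp : p ∈ A†.domain) (hpK : p ∈ graphOrthogonal A† B.domain) (f : B.domain) :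
    inner 𝕜 p (f : F) = inner 𝕜 (A† ⟨p, hp⟩) (B f) := by
  have hf : (f : F) ∈ A†.domain := hBA.1 f.2
  have := hpK.2 f f.2 hf
  rw [apply_eq_neg_of_le_neg hBA f hf, inner_neg_right] at this
  linear_combination this

variable [CompleteSpace F]

theorem adjoint_apply_mem_adjoint_domain (hBA : B ≤ -A†) {p : F}
    (hp : p ∈ A†.domain) (hpK : p ∈ graphOrthogonal A† B.domain) :
    (A† ⟨p, hp⟩ : E) ∈ B†.domain :=
  mem_adjoint_domain_of_exists _ ⟨p, inner_eq_inner_apply_of_mem_graphOrthogonal hBA hp hpK⟩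

theorem adjoint_adjoint_apply_of_mem_graphOrthogonal (hBdense : Dense (B.domain : Set F))
    (hBA : B ≤ -A†) {p : F} (hp : p ∈ A†.domain) (hpK : p ∈ graphOrthogonal A† B.domain)
    (hq : (A† ⟨p, hp⟩ : E) ∈ B†.domain) : B† ⟨A† ⟨p, hp⟩, hq⟩ = p :=
  adjoint_apply_eq hBdense _ (inner_eq_inner_apply_of_mem_graphOrthogonal hBA hp hpK)

/-- On the graph-orthocomplement of `D(B)` the identity `B† A† p = p` turns the graph inner
product of `B†` against `g ∈ D(A)` into `⟪A† p, g⟫ - ⟪p, A g⟫`, which vanishes. -/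
theorem adjoint_apply_mem_graphOrthogonal (hAdense : Dense (A.domain : Set E))
    (hBdense : Dense (B.domain : Set F)) (hBA : B ≤ -A†) (hAB : A ≤ -B†) {p : F}
    (hp : p ∈ A†.domain) (hpK : p ∈ graphOrthogonal A† B.domain) :
    (A† ⟨p, hp⟩ : E) ∈ graphOrthogonal B† A.domain := by
  have hq := adjoint_apply_mem_adjoint_domain hBA hp hpK
  refine ⟨hq, fun g hgA hg => ?_⟩
  rw [adjoint_adjoint_apply_of_mem_graphOrthogonal hBdense hBA hp hpK hq,
    apply_eq_neg_of_le_neg hAB ⟨g, hgA⟩ hg, inner_neg_right,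
    ← adjoint_isFormalAdjoint hAdense ⟨p, hp⟩ ⟨g, hgA⟩, add_neg_cancel]

end LinearPMap

open LinearPMap

theorem adjoint_restriction_unitary_general
    {G : Type*} [NormedAddCommGroup G] [InnerProductSpace ℝ G] [CompleteSpace G]
    (A B : G →ₗ.[ℝ] G)
    (hAdense : Dense (A.domain : Set G)) (hBdense : Dense (B.domain : Set G))
    (hBA : B ≤ -A.adjoint) (hAB : A ≤ -B.adjoint)
    -- `K`: the orthocomplement of `D(B)` in `D(A*) = D(-A*)` for the graph inner product of `A*`
    (K : Set G) (hK : K = {p | ∃ hp : p ∈ A.adjoint.domain,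
      ∀ f ∈ B.domain, ∀ hf : f ∈ A.adjoint.domain,
        (inner ℝ p f : ℝ) + inner ℝ (A.adjoint ⟨p, hp⟩) (A.adjoint ⟨f, hf⟩) = 0})
    -- `K'`: the orthocomplement of `D(A)` in `D(B*) = D(-B*)` for the graph inner product of `B*`
    (K' : Set G) (hK' : K' = {q | ∃ hq : q ∈ B.adjoint.domain,
      ∀ g ∈ A.domain, ∀ hg : g ∈ B.adjoint.domain,
        (inner ℝ q g : ℝ) + inner ℝ (B.adjoint ⟨q, hq⟩) (B.adjoint ⟨g, hg⟩) = 0}) :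
    -- `A*` maps `K` into `K'` and `B* A* = id` on `K`
    (∀ p, ∀ hp : p ∈ A.adjoint.domain, p ∈ K →
      (A.adjoint ⟨p, hp⟩ : G) ∈ K' ∧
      ∀ hq : (A.adjoint ⟨p, hp⟩ : G) ∈ B.adjoint.domain,
        B.adjoint ⟨A.adjoint ⟨p, hp⟩, hq⟩ = p) ∧
    -- `B*` maps `K'` into `K` and `A* B* = id` on `K'`
    (∀ q, ∀ hq : q ∈ B.adjoint.domain, q ∈ K' →
      (B.adjoint ⟨q, hq⟩ : G) ∈ K ∧
      ∀ hp : (B.adjoint ⟨q, hq⟩ : G) ∈ A.adjoint.domain,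
        A.adjoint ⟨B.adjoint ⟨q, hq⟩, hp⟩ = q) ∧
    -- `A*` is isometric from `K` (graph inner product of `A*`) to `K'` (graph inner product of `B*`)
    (∀ p₁ p₂, ∀ hp₁ : p₁ ∈ A.adjoint.domain, ∀ hp₂ : p₂ ∈ A.adjoint.domain,
      p₁ ∈ K → p₂ ∈ K →
      ∀ hq₁ : (A.adjoint ⟨p₁, hp₁⟩ : G) ∈ B.adjoint.domain,
      ∀ hq₂ : (A.adjoint ⟨p₂, hp₂⟩ : G) ∈ B.adjoint.domain,
        (inner ℝ (A.adjoint ⟨p₁, hp₁⟩) (A.adjoint ⟨p₂, hp₂⟩) : ℝ) +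
          inner ℝ (B.adjoint ⟨A.adjoint ⟨p₁, hp₁⟩, hq₁⟩) (B.adjoint ⟨A.adjoint ⟨p₂, hp₂⟩, hq₂⟩)
        = (inner ℝ p₁ p₂ : ℝ) + inner ℝ (A.adjoint ⟨p₁, hp₁⟩) (A.adjoint ⟨p₂, hp₂⟩)) := by
  change K = graphOrthogonal A† B.domain at hK
  change K' = graphOrthogonal B† A.domain at hK'
  subst hK hK'
  refine ⟨fun p hp hpK => ⟨?_, ?_⟩, fun q hq hqK => ⟨?_, ?_⟩, ?_⟩
  · exact adjoint_apply_mem_graphOrthogonal hAdense hBdense hBA hAB hp hpK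
  · exact adjoint_adjoint_apply_of_mem_graphOrthogonal hBdense hBA hp hpK
  · exact adjoint_apply_mem_graphOrthogonal hBdense hAdense hAB hBA hq hqK
  · exact adjoint_adjoint_apply_of_mem_graphOrthogonal hAdense hAB hq hqK
  · intro p₁ p₂ hp₁ hp₂ hp₁K hp₂K hq₁ hq₂
    rw [adjoint_adjoint_apply_of_mem_graphOrthogonal hBdense hBA hp₁ hp₁K,
      adjoint_adjoint_apply_of_mem_graphOrthogonal hBdense hBA hp₂ hp₂K, add_comm]

/-- Let `A`, `B` be densely defined closed operators on a real Hilbert space `G` with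
`B ⊆ -A*` and `A ⊆ -B*`.  Let `K` be the orthogonal complement of `D(B)` in `D(-A*)`
with respect to the graph inner product of `A*`, and `K'` the orthogonal complement of
`D(A)` in `D(-B*)` with respect to the graph inner product of `B*`.  Then `A*` restricted
to `K` is a unitary (for the graph inner products) from `K` onto `K'`, whose inverse is
the restriction of `B*` to `K'`. -/
theorem adjoint_restriction_unitary
    {G : Type*} [NormedAddCommGroup G] [InnerProductSpace ℝ G] [CompleteSpace G]
    (A B : G →ₗ.[ℝ] G)
    (hAdense : Dense (A.domain : Set G)) (hBdense : Dense (B.domain : Set G))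
    (hAclosed : A.IsClosed) (hBclosed : B.IsClosed)
    (hBA : B ≤ -A.adjoint) (hAB : A ≤ -B.adjoint)
    -- `K`: the orthocomplement of `D(B)` in `D(A*) = D(-A*)` for the graph inner product of `A*`
    (K : Set G) (hK : K = {p | ∃ hp : p ∈ A.adjoint.domain,
      ∀ f ∈ B.domain, ∀ hf : f ∈ A.adjoint.domain,
        (inner ℝ p f : ℝ) + inner ℝ (A.adjoint ⟨p, hp⟩) (A.adjoint ⟨f, hf⟩) = 0})
    -- `K'`: the orthocomplement of `D(A)` in `D(B*) = D(-B*)` for the graph inner product of `B*`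
    (K' : Set G) (hK' : K' = {q | ∃ hq : q ∈ B.adjoint.domain,
      ∀ g ∈ A.domain, ∀ hg : g ∈ B.adjoint.domain,
        (inner ℝ q g : ℝ) + inner ℝ (B.adjoint ⟨q, hq⟩) (B.adjoint ⟨g, hg⟩) = 0}) :
    -- `A*` maps `K` into `K'` and `B* A* = id` on `K`
    (∀ p, ∀ hp : p ∈ A.adjoint.domain, p ∈ K →
      (A.adjoint ⟨p, hp⟩ : G) ∈ K' ∧
      ∀ hq : (A.adjoint ⟨p, hp⟩ : G) ∈ B.adjoint.domain,
        B.adjoint ⟨A.adjoint ⟨p, hp⟩, hq⟩ = p) ∧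
    -- `B*` maps `K'` into `K` and `A* B* = id` on `K'`
    (∀ q, ∀ hq : q ∈ B.adjoint.domain, q ∈ K' →
      (B.adjoint ⟨q, hq⟩ : G) ∈ K ∧
      ∀ hp : (B.adjoint ⟨q, hq⟩ : G) ∈ A.adjoint.domain,
        A.adjoint ⟨B.adjoint ⟨q, hq⟩, hp⟩ = q) ∧
    -- `A*` is isometric from `K` (graph inner product of `A*`) to `K'` (graph inner product of `B*`)
    (∀ p₁ p₂, ∀ hp₁ : p₁ ∈ A.adjoint.domain, ∀ hp₂ : p₂ ∈ A.adjoint.domain,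
      p₁ ∈ K → p₂ ∈ K →
      ∀ hq₁ : (A.adjoint ⟨p₁, hp₁⟩ : G) ∈ B.adjoint.domain,
      ∀ hq₂ : (A.adjoint ⟨p₂, hp₂⟩ : G) ∈ B.adjoint.domain,
        (inner ℝ (A.adjoint ⟨p₁, hp₁⟩) (A.adjoint ⟨p₂, hp₂⟩) : ℝ) +
          inner ℝ (B.adjoint ⟨A.adjoint ⟨p₁, hp₁⟩, hq₁⟩) (B.adjoint ⟨A.adjoint ⟨p₂, hp₂⟩, hq₂⟩)
        = (inner ℝ p₁ p₂ : ℝ) + inner ℝ (A.adjoint ⟨p₁, hp₁⟩) (A.adjoint ⟨p₂, hp₂⟩)) :=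
  adjoint_restriction_unitary_general A B hAdense hBdense hBA hAB K hK K' hK'
end

section
/- Let {S_t} and {T_t} be C0-semigroups on a real Hilbert space G with T_t* S_t = I for all t ≥ 0. If {c_t} is a real additive cocycle (c_t ∈ Ker(T_t*), c_{s+t} = c_s + S_s c_t) and {d_t} is an imaginary additive cocycle (d_t ∈ Ker(S_t*), d_{s+t} = d_s + T_s d_t), both weakly measurable in t, then ⟨c_t, d_t⟩ = t·⟨c_1, d_1⟩ for all t > 0. -/
/-! Writing `φ t = ⟪c t, d t⟫`, the kernel conditions give `c s ⊥ T s (d t)` and `S s (c t) ⊥ d s`,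
and `T_s* S_s = 1` gives `⟪S s (c t), T s (d t)⟫ = φ t`, so `φ` is additive on `(0, ∞)`. On `(0, 1)`
it coincides with the measurable function `s ↦ ⟪c s, d 1⟫`. An additive function that agrees with a
measurable one on a set of positive measure is bounded on a set of positive measure, hence, by
Steinhaus' theorem, bounded near `0`, hence continuous, hence linear. -/

open ContinuousLinearMap MeasureTheory Filter Topology Set

theorem exists_pos_sub_eq (t : ℝ) : ∃ a b : ℝ, 0 < a ∧ 0 < b ∧ a - b = t :=
  ⟨t + (|t| + 1), |t| + 1, by linarith [neg_abs_le t], by positivity, by ring⟩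

/-- `φ a - φ b` for any `a, b > 0` with `a - b = t`; when `φ` is additive on `(0, ∞)` the choice of
`a, b` does not matter (`extendAddOfPos_sub`). -/
def extendAddOfPos (φ : ℝ → ℝ) (t : ℝ) : ℝ := φ (t + (|t| + 1)) - φ (|t| + 1)

section ExtendAddOfPos

variable {φ : ℝ → ℝ} (hφ : ∀ s t, 0 < s → 0 < t → φ (s + t) = φ s + φ t)
include hφ

theorem extendAddOfPos_sub {a b : ℝ} (ha : 0 < a) (hb : 0 < b) :
    extendAddOfPos φ (a - b) = φ a - φ b := by
  have hk : 0 < |a - b| + 1 := by positivity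
  have hk' : 0 < a - b + (|a - b| + 1) := by linarith [neg_abs_le (a - b)]
  have h := (hφ _ _ hk' hb).symm.trans
    ((congrArg φ (by ring : a - b + (|a - b| + 1) + b = a + (|a - b| + 1))).trans (hφ _ _ ha hk))
  unfold extendAddOfPos
  linarith

theorem extendAddOfPos_of_pos {t : ℝ} (ht : 0 < t) : extendAddOfPos φ t = φ t := by
  have h := extendAddOfPos_sub hφ (by linarith : 0 < t + 1) one_pos
  rw [add_sub_cancel_right] at h
  linarith [hφ t 1 ht one_pos]

def AddMonoidHom.ofAddOnPos : ℝ →+ ℝ :=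
  AddMonoidHom.mk' (extendAddOfPos φ) fun s t => by
    obtain ⟨a, b, ha, hb, rfl⟩ := exists_pos_sub_eq s
    obtain ⟨a', b', ha', hb', rfl⟩ := exists_pos_sub_eq t
    rw [sub_add_sub_comm, extendAddOfPos_sub hφ (add_pos ha ha') (add_pos hb hb'),
      extendAddOfPos_sub hφ ha hb, extendAddOfPos_sub hφ ha' hb', hφ a a' ha ha', hφ b b' hb hb']
    ring

end ExtendAddOfPos

namespace AddMonoidHom

variable {G : Type*} [AddCommGroup G] [TopologicalSpace G] [IsTopologicalAddGroup G]

theorem continuous_of_eventually_abs_le (f : G →+ ℝ) {M : ℝ} (hf : ∀ᶠ x in 𝓝 0, |f x| ≤ M) :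
    Continuous f := by
  refine continuous_of_continuousAt_zero f ?_
  rw [ContinuousAt, map_zero, Metric.tendsto_nhds]
  intro ε hε
  obtain ⟨n, hn⟩ := exists_nat_gt (M / ε)
  have hsmul : Tendsto (fun x : G => n • x) (𝓝 0) (𝓝 0) := by
    simpa using ((continuous_nsmul n).tendsto (0 : G))
  filter_upwards [hsmul.eventually hf] with x hx
  rw [map_nsmul, nsmul_eq_mul, abs_mul, Nat.abs_cast] at hx
  rw [div_lt_iff₀ hε] at hn
  rw [Real.dist_eq, sub_zero]
  nlinarith [Nat.cast_nonneg (α := ℝ) n]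

variable [LocallyCompactSpace G] [MeasurableSpace G] [BorelSpace G]

theorem continuous_of_abs_le_on (f : G →+ ℝ) (μ : Measure G) [μ.IsAddHaarMeasure] [μ.InnerRegular]
    {E : Set G} (hE : MeasurableSet E) (hE0 : μ E ≠ 0) {M : ℝ} (hf : ∀ x ∈ E, |f x| ≤ M) :
    Continuous f := by
  refine f.continuous_of_eventually_abs_le (M := 2 * M) ?_
  filter_upwards [Measure.sub_mem_nhds_zero_of_addHaar_pos μ E hE (pos_iff_ne_zero.2 hE0)]
  rintro _ ⟨x, hx, y, hy, rfl⟩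
  rw [map_sub]
  linarith [abs_sub (f x) (f y), hf x hx, hf y hy]

theorem continuous_of_eqOn_measurable (f : G →+ ℝ) (μ : Measure G) [μ.IsAddHaarMeasure]
    [μ.InnerRegular] {g : G → ℝ} (hg : Measurable g) {U : Set G} (hU : MeasurableSet U)
    (hU0 : μ U ≠ 0) (hfg : EqOn f g U) : Continuous f := by
  set E : ℕ → Set G := fun n => U ∩ {x | |g x| ≤ n}
  have hEU : ⋃ n, E n = U := by
    refine Subset.antisymm (iUnion_subset fun n => inter_subset_left) fun x hx => ?_
    obtain ⟨n, hn⟩ := exists_nat_ge |g x|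
    exact mem_iUnion.2 ⟨n, hx, hn⟩
  obtain ⟨n, hn⟩ : ∃ n, μ (E n) ≠ 0 := by
    by_contra! h
    exact hU0 (hEU ▸ measure_iUnion_null h)
  refine f.continuous_of_abs_le_on μ (M := n)
    (hU.inter (measurableSet_le hg.abs measurable_const)) hn fun x hx => ?_
  rw [hfg hx.1]
  exact hx.2

end AddMonoidHom

theorem eq_mul_of_add_of_eqOn_measurable {φ g : ℝ → ℝ}
    (hφ : ∀ s t, 0 < s → 0 < t → φ (s + t) = φ s + φ t) (hg : Measurable g) {U : Set ℝ}
    (hU : MeasurableSet U) (hU_pos : U ⊆ Ioi 0) (hU0 : volume U ≠ 0) (hφg : EqOn φ g U)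
    {t : ℝ} (ht : 0 < t) : φ t = t * φ 1 := by
  set f := AddMonoidHom.ofAddOnPos hφ
  have hfφ : EqOn f φ (Ioi 0) := fun t ht => extendAddOfPos_of_pos hφ ht
  have hf : Continuous f :=
    f.continuous_of_eqOn_measurable volume hg hU hU0 ((hfφ.mono hU_pos).trans hφg)
  rw [← hfφ ht, ← hfφ (mem_Ioi.2 one_pos)]
  simpa using map_real_smul f hf t 1

section Cocycle

variable {G : Type*} [NormedAddCommGroup G] [InnerProductSpace ℝ G] [CompleteSpace G]
  {S T : ℝ → G →L[ℝ] G} {c d : ℝ → G}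

theorem inner_cocycle_of_lt (hcker : ∀ t : ℝ, 0 < t → adjoint (T t) (c t) = 0)
    (hdcoc : ∀ s t : ℝ, 0 < s → 0 < t → d (s + t) = d s + T s (d t)) {s u : ℝ} (hs : 0 < s)
    (hsu : s < u) : (inner ℝ (c s) (d u) : ℝ) = inner ℝ (c s) (d s) := by
  rw [← add_sub_cancel s u, hdcoc s (u - s) hs (sub_pos.2 hsu), inner_add_right,
    ← adjoint_inner_left, hcker s hs, inner_zero_left, add_zero]

theorem inner_cocycle_add (hTS : ∀ t : ℝ, 0 ≤ t → (adjoint (T t)) ∘L S t = 1)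
    (hcker : ∀ t : ℝ, 0 < t → adjoint (T t) (c t) = 0)
    (hdker : ∀ t : ℝ, 0 < t → adjoint (S t) (d t) = 0)
    (hccoc : ∀ s t : ℝ, 0 < s → 0 < t → c (s + t) = c s + S s (c t))
    (hdcoc : ∀ s t : ℝ, 0 < s → 0 < t → d (s + t) = d s + T s (d t)) {s t : ℝ} (hs : 0 < s)
    (ht : 0 < t) :
    (inner ℝ (c (s + t)) (d (s + t)) : ℝ) = inner ℝ (c s) (d s) + inner ℝ (c t) (d t) := by
  have h₁ : (inner ℝ (c s) (T s (d t)) : ℝ) = 0 := by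
    rw [← adjoint_inner_left, hcker s hs, inner_zero_left]
  have h₂ : (inner ℝ (S s (c t)) (d s) : ℝ) = 0 := by
    rw [← adjoint_inner_right, hdker s hs, inner_zero_right]
  have h₃ : (inner ℝ (S s (c t)) (T s (d t)) : ℝ) = inner ℝ (c t) (d t) := by
    rw [← adjoint_inner_left, ← comp_apply, hTS s hs.le, one_apply_eq_self]
  rw [hccoc s t hs ht, hdcoc s t hs ht, inner_add_left, inner_add_right, inner_add_right, h₁, h₂,
    h₃, add_zero, zero_add]

end Cocycle

theorem cocycle_pairing_linear_general
    {G : Type*} [NormedAddCommGroup G] [InnerProductSpace ℝ G] [CompleteSpace G]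
    (S T : ℝ → G →L[ℝ] G)
    (hTS : ∀ t : ℝ, 0 ≤ t → (adjoint (T t)) ∘L S t = 1)
    (c d : ℝ → G)
    (hcker : ∀ t : ℝ, 0 < t → adjoint (T t) (c t) = 0)
    (hdker : ∀ t : ℝ, 0 < t → adjoint (S t) (d t) = 0)
    (hccoc : ∀ s t : ℝ, 0 < s → 0 < t → c (s + t) = c s + S s (c t))
    (hdcoc : ∀ s t : ℝ, 0 < s → 0 < t → d (s + t) = d s + T s (d t))
    (hcmeas : ∀ x : G, Measurable fun t => (inner ℝ (c t) x : ℝ)) :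
    ∀ t : ℝ, 0 < t → (inner ℝ (c t) (d t) : ℝ) = t * inner ℝ (c 1) (d 1) := by
  intro t ht
  exact eq_mul_of_add_of_eqOn_measurable (g := fun s => inner ℝ (c s) (d 1))
    (fun s t hs ht => inner_cocycle_add hTS hcker hdker hccoc hdcoc hs ht) (hcmeas (d 1))
    measurableSet_Ioo Ioo_subset_Ioi_self (by simp)
    (fun s hs => (inner_cocycle_of_lt hcker hdcoc hs.1 hs.2).symm) ht

/-- If `(S_t)`, `(T_t)` are C₀-semigroups on a real Hilbert space `G` with `T_t* S_t = I`,
`(c_t)` is a weakly measurable real additive cocycle (`c_t ∈ Ker T_t*`,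
`c_{s+t} = c_s + S_s c_t`) and `(d_t)` a weakly measurable imaginary additive cocycle
(`d_t ∈ Ker S_t*`, `d_{s+t} = d_s + T_s d_t`), then `⟨c_t, d_t⟩ = t ⟨c_1, d_1⟩`. -/
theorem cocycle_pairing_linear
    {G : Type*} [NormedAddCommGroup G] [InnerProductSpace ℝ G] [CompleteSpace G]
    (S T : ℝ → G →L[ℝ] G)
    (hS0 : S 0 = 1) (hT0 : T 0 = 1)
    (hSadd : ∀ s t : ℝ, 0 ≤ s → 0 ≤ t → S (s + t) = S s ∘L S t)
    (hTadd : ∀ s t : ℝ, 0 ≤ s → 0 ≤ t → T (s + t) = T s ∘L T t)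
    (hScont : ∀ x : G, ContinuousOn (fun t => S t x) (Set.Ici 0))
    (hTcont : ∀ x : G, ContinuousOn (fun t => T t x) (Set.Ici 0))
    (hTS : ∀ t : ℝ, 0 ≤ t → (adjoint (T t)) ∘L S t = 1)
    (c d : ℝ → G)
    (hcker : ∀ t : ℝ, 0 < t → adjoint (T t) (c t) = 0)
    (hdker : ∀ t : ℝ, 0 < t → adjoint (S t) (d t) = 0)
    (hccoc : ∀ s t : ℝ, 0 < s → 0 < t → c (s + t) = c s + S s (c t))
    (hdcoc : ∀ s t : ℝ, 0 < s → 0 < t → d (s + t) = d s + T s (d t))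
    (hcmeas : ∀ x : G, Measurable fun t => (inner ℝ (c t) x : ℝ))
    (hdmeas : ∀ x : G, Measurable fun t => (inner ℝ (d t) x : ℝ)) :
    ∀ t : ℝ, 0 < t → (inner ℝ (c t) (d t) : ℝ) = t * inner ℝ (c 1) (d 1) :=
  cocycle_pairing_linear_general S T hTS c d hcker hdker hccoc hdcoc hcmeas
end

section
/- Let (w, K) be a continuous unitary representation of a real Hilbert space G (as additive group) on a complex Hilbert space K which does not contain the trivial representation, and let c: G → K be a continuous 1-cocycle, i.e., c(r+s) = c(r) + w(r)c(s) for all r, s ∈ G. Then for all r, s ∈ G: ⟨c(r), w(r)c(s)⟩ = ⟨c(s), w(s)c(r)⟩. -/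
/-!
For a coboundary `c t = F - w t F` the identity is a direct expansion, using only that `w r` and
`w s` are commuting unitaries. In general, the cocycle identity in the symmetric form
`c t - w u (c t) = c u - w t (c u)` shows that `t ↦ c t - T (c t)` is a coboundary whenever `T`
is the product of the ergodic averages of `w r` and `w s`: the Cesàro means of the geometric sums
of `w a` invert `1 - w a` up to `1 - ergodicAverage (w a) n`. By the mean ergodic theorem the
averages of `w a` applied to `c a` converge, and the limit is fixed by every `w t`, because
`w t (c a) - c a = w a (c t) - c t` has averages tending to `0`. With no invariant vectors the
limit is `0`, so `c r` and `c s` are simultaneous limits of coboundaries and the identity passes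
to the limit.
-/

open Filter Finset Topology

namespace ContinuousLinearMap

section NormedSpace

variable {𝕜 E : Type*} [RCLike 𝕜] [NormedAddCommGroup E] [NormedSpace 𝕜 E]

noncomputable def ergodicAverage (U : E →L[𝕜] E) (n : ℕ) : E →L[𝕜] E :=
  (n : 𝕜)⁻¹ • ∑ k ∈ range n, U ^ k

noncomputable def cesaroGeomSum (U : E →L[𝕜] E) (n : ℕ) : E →L[𝕜] E :=
  (n : 𝕜)⁻¹ • ∑ k ∈ range n, ∑ i ∈ range k, U ^ i

variable {U V : E →L[𝕜] E}

theorem ergodicAverage_apply_eq_birkhoffAverage (n : ℕ) (x : E) :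
    ergodicAverage U n x = birkhoffAverage 𝕜 U id n x := by
  simp [ergodicAverage, birkhoffAverage, birkhoffSum, _root_.sum_apply]

theorem _root_.Commute.ergodicAverage_right (h : Commute V U) (n : ℕ) :
    Commute V (ergodicAverage U n) :=
  (Commute.sum_right _ _ _ fun _ _ => h.pow_right _).smul_right _

theorem _root_.Commute.ergodicAverage (h : Commute U V) (m n : ℕ) :
    Commute (ergodicAverage U m) (ergodicAverage V n) :=
  ((h.ergodicAverage_right n).symm.ergodicAverage_right m).symm

theorem _root_.Commute.cesaroGeomSum_right (h : Commute V U) (n : ℕ) :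
    Commute V (cesaroGeomSum U n) :=
  (Commute.sum_right _ _ _ fun _ _ => Commute.sum_right _ _ _ fun _ _ => h.pow_right _).smul_right _

theorem cesaroGeomSum_mul_one_sub {n : ℕ} (hn : n ≠ 0) :
    cesaroGeomSum U n * (1 - U) = 1 - ergodicAverage U n := by
  rw [cesaroGeomSum, ergodicAverage, smul_mul_assoc, sum_mul]
  simp only [geom_sum_mul_neg, sum_sub_distrib, sum_const, card_range, smul_sub]
  rw [← Nat.cast_smul_eq_nsmul 𝕜, smul_smul, inv_mul_cancel₀ (Nat.cast_ne_zero.mpr hn), one_smul]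

theorem norm_pow_le_one (hU : ‖U‖ ≤ 1) (k : ℕ) : ‖U ^ k‖ ≤ 1 := by
  induction k with
  | zero => exact norm_id_le
  | succ k ih => exact (norm_mul_le _ _).trans (mul_le_one₀ ih (norm_nonneg _) hU)

theorem norm_ergodicAverage_le (hU : ‖U‖ ≤ 1) (n : ℕ) : ‖ergodicAverage U n‖ ≤ 1 := by
  rcases eq_or_ne n 0 with rfl | hn
  · simp [ergodicAverage]
  unfold ergodicAverage
  calc ‖(n : 𝕜)⁻¹ • ∑ k ∈ range n, U ^ k‖ = ‖(n : 𝕜)⁻¹‖ * ‖∑ k ∈ range n, U ^ k‖ :=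
        norm_smul _ _
    _ ≤ ‖(n : 𝕜)⁻¹‖ * ∑ k ∈ range n, ‖U ^ k‖ := by gcongr; exact norm_sum_le _ _
    _ ≤ ‖(n : 𝕜)⁻¹‖ * ∑ _k ∈ range n, 1 := by gcongr with k; exact norm_pow_le_one hU k
    _ = 1 := by simp [hn]

theorem tendsto_ergodicAverage_apply_sub (hU : ‖U‖ ≤ 1) (x : E) :
    Tendsto (fun n => ergodicAverage U n (U x - x)) atTop (𝓝 0) := by
  have hbdd : Bornology.IsBounded (Set.range fun k => (⇑U)^[k] x) :=
    isBounded_iff_forall_norm_le.2 ⟨‖x‖, Set.forall_mem_range.2 fun k => by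
      rw [← FunLike.coe_pow_eq_iterate]
      exact (le_opNorm _ _).trans (mul_le_of_le_one_left (norm_nonneg _) (norm_pow_le_one hU k))⟩
  simpa [map_sub, ergodicAverage_apply_eq_birkhoffAverage] using
    tendsto_birkhoffAverage_apply_sub_birkhoffAverage 𝕜 hbdd

end NormedSpace

section InnerProductSpace

variable {𝕜 E : Type*} [RCLike 𝕜] [NormedAddCommGroup E] [InnerProductSpace 𝕜 E]
  [CompleteSpace E]

theorem exists_tendsto_ergodicAverage {U : E →L[𝕜] E} (hU : ‖U‖ ≤ 1) (x : E) :
    ∃ p, Tendsto (fun n => ergodicAverage U n x) atTop (𝓝 p) :=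
  ⟨_, by simpa [ergodicAverage_apply_eq_birkhoffAverage] using
    U.tendsto_birkhoffAverage_orthogonalProjection hU x⟩

theorem norm_le_one_of_mem_unitary {U : E →L[𝕜] E} (hU : U ∈ unitary (E →L[𝕜] E)) : ‖U‖ ≤ 1 :=
  opNorm_le_bound _ zero_le_one fun x => by rw [norm_map_of_mem_unitary hU, one_mul]

end InnerProductSpace

end ContinuousLinearMap

open ContinuousLinearMap

section Cocycle

variable {𝕜 G E : Type*} [RCLike 𝕜] [AddCommMagma G] [NormedAddCommGroup E] [NormedSpace 𝕜 E]
  {w : G → E →L[𝕜] E} {c : G → E}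

theorem cocycle_sub_comm (hc : ∀ r s, c (r + s) = c r + w r (c s)) (t u : G) :
    c t - w u (c t) = c u - w t (c u) := by
  rw [sub_eq_sub_iff_add_eq_add, ← hc, ← hc, add_comm]

theorem exists_coboundary_sub_ergodicAverage (hc : ∀ r s, c (r + s) = c r + w r (c s)) {a : G}
    (hcomm : ∀ t, Commute (w t) (w a)) {n : ℕ} (hn : n ≠ 0) :
    ∃ F, ∀ t, c t - ergodicAverage (w a) n (c t) = F - w t F := by
  refine ⟨cesaroGeomSum (w a) n (c a), fun t => ?_⟩
  calc c t - ergodicAverage (w a) n (c t)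
      = (cesaroGeomSum (w a) n * (1 - w a)) (c t) := by
        rw [cesaroGeomSum_mul_one_sub hn]; rfl
    _ = cesaroGeomSum (w a) n (c a - w t (c a)) := by
        rw [mul_apply_eq_comp, sub_apply, one_apply_eq_self, ← cocycle_sub_comm hc]
    _ = cesaroGeomSum (w a) n (c a) - w t (cesaroGeomSum (w a) n (c a)) := by
        rw [map_sub, ← mul_apply_eq_comp, ← ((hcomm t).cesaroGeomSum_right n).eq,
          mul_apply_eq_comp]

theorem exists_coboundary_sub_ergodicAverage_mul (hc : ∀ r s, c (r + s) = c r + w r (c s))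
    (hcomm : ∀ t u, Commute (w t) (w u)) (a b : G) {n : ℕ} (hn : n ≠ 0) :
    ∃ F, ∀ t, c t - (ergodicAverage (w a) n * ergodicAverage (w b) n) (c t) = F - w t F := by
  obtain ⟨Fa, hFa⟩ := exists_coboundary_sub_ergodicAverage hc (fun t => hcomm t a) hn
  obtain ⟨Fb, hFb⟩ := exists_coboundary_sub_ergodicAverage hc (fun t => hcomm t b) hn
  refine ⟨Fa + ergodicAverage (w a) n Fb, fun t => ?_⟩
  have hta : w t (ergodicAverage (w a) n Fb) = ergodicAverage (w a) n (w t Fb) := by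
    rw [← mul_apply_eq_comp, ((hcomm t a).ergodicAverage_right n).eq, mul_apply_eq_comp]
  calc c t - (ergodicAverage (w a) n * ergodicAverage (w b) n) (c t)
      = (c t - ergodicAverage (w a) n (c t))
          + ergodicAverage (w a) n (c t - ergodicAverage (w b) n (c t)) := by
        rw [mul_apply_eq_comp, map_sub]; abel
    _ = Fa + ergodicAverage (w a) n Fb - w t (Fa + ergodicAverage (w a) n Fb) := by
        rw [hFa, hFb, map_sub, map_add, hta]; abel

end Cocycle

section UnitaryCocycle

variable {𝕜 G E : Type*} [RCLike 𝕜] [AddCommMagma G] [NormedAddCommGroup E]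
  [InnerProductSpace 𝕜 E] [CompleteSpace E] {w : G → E →L[𝕜] E} {c : G → E}

theorem inner_coboundary_symm {U V : E →L[𝕜] E} (hU : U ∈ unitary (E →L[𝕜] E))
    (hV : V ∈ unitary (E →L[𝕜] E)) (hUV : Commute U V) (F : E) :
    inner 𝕜 (U (F - V F)) (F - U F) = inner 𝕜 (V (F - U F)) (F - V F) := by
  have hUV' : U (V F) = V (U F) := by rw [← mul_apply_eq_comp, hUV.eq, mul_apply_eq_comp]
  simp only [map_sub, inner_sub_left, inner_sub_right, inner_map_map_of_mem_unitary hU,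
    inner_map_map_of_mem_unitary hV]
  rw [hUV']
  ring

theorem tendsto_ergodicAverage_cocycle_self (hc : ∀ r s, c (r + s) = c r + w r (c s)) {a : G}
    (hcomm : ∀ t, Commute (w t) (w a)) (ha : ‖w a‖ ≤ 1)
    (hfix : ∀ x, (∀ t, w t x = x) → x = 0) :
    Tendsto (fun n => ergodicAverage (w a) n (c a)) atTop (𝓝 0) := by
  obtain ⟨p, hp⟩ := exists_tendsto_ergodicAverage ha (c a)
  suffices p = 0 from this ▸ hp
  refine hfix p fun t => ?_
  have hshift : ∀ n, w t (ergodicAverage (w a) n (c a))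
      = ergodicAverage (w a) n (c a) + ergodicAverage (w a) n (w a (c t) - c t) := fun n => by
    rw [← mul_apply_eq_comp, ((hcomm t).ergodicAverage_right n).eq, mul_apply_eq_comp,
      ← neg_sub, cocycle_sub_comm hc, neg_sub, map_sub]
    abel
  have hlim : Tendsto (fun n => w t (ergodicAverage (w a) n (c a))) atTop (𝓝 (p + 0)) := by
    simpa only [hshift] using hp.add (tendsto_ergodicAverage_apply_sub ha (c t))
  rw [add_zero] at hlim
  exact tendsto_nhds_unique (((w t).continuous.tendsto p).comp hp) hlim

theorem tendsto_ergodicAverage_mul_cocycle (hc : ∀ r s, c (r + s) = c r + w r (c s))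
    (hcomm : ∀ t u, Commute (w t) (w u)) (hw : ∀ t, ‖w t‖ ≤ 1)
    (hfix : ∀ x, (∀ t, w t x = x) → x = 0) (a b : G) :
    Tendsto (fun n => (ergodicAverage (w a) n * ergodicAverage (w b) n) (c a)) atTop (𝓝 0) ∧
      Tendsto (fun n => (ergodicAverage (w a) n * ergodicAverage (w b) n) (c b)) atTop (𝓝 0) := by
  have key : ∀ a b, Tendsto (fun n => (ergodicAverage (w a) n * ergodicAverage (w b) n) (c b))
      atTop (𝓝 0) := fun a b => by
    refine squeeze_zero_norm (fun n => ?_) <| tendsto_zero_iff_norm_tendsto_zero.1 <|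
      tendsto_ergodicAverage_cocycle_self hc (fun t => hcomm t b) (hw b) hfix
    rw [mul_apply_eq_comp]
    exact (le_opNorm _ _).trans
      (mul_le_of_le_one_left (norm_nonneg _) (norm_ergodicAverage_le (hw a) n))
  refine ⟨?_, key a b⟩
  simpa only [((hcomm b a).ergodicAverage _ _).eq] using key b a

end UnitaryCocycle

theorem cocycle_symmetry_general
    {G : Type*} [NormedAddCommGroup G]
    {K : Type*} [NormedAddCommGroup K] [InnerProductSpace ℂ K] [CompleteSpace K]
    (w : G → K →L[ℂ] K)
    (hwadd : ∀ r s : G, w (r + s) = w r ∘L w s)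
    (hwunitary : ∀ r : G, (adjoint (w r)) ∘L w r = 1 ∧ w r ∘L (adjoint (w r)) = 1)
    (hnotriv : ∀ f : K, (∀ r : G, w r f = f) → f = 0)
    (c : G → K)
    (hccoc : ∀ r s : G, c (r + s) = c r + w r (c s)) :
    ∀ r s : G, (inner ℂ (w r (c s)) (c r) : ℂ) = inner ℂ (w s (c r)) (c s) := by
  intro r s
  have hunit : ∀ t, w t ∈ unitary (K →L[ℂ] K) := hwunitary
  have hcomm : ∀ t u, Commute (w t) (w u) := fun t u => by
    change w t ∘L w u = w u ∘L w t
    rw [← hwadd, ← hwadd, add_comm]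
  obtain ⟨hr, hs⟩ := tendsto_ergodicAverage_mul_cocycle hccoc hcomm
    (fun t => norm_le_one_of_mem_unitary (hunit t)) hnotriv r s
  set T : ℕ → K →L[ℂ] K := fun n => ergodicAverage (w r) n * ergodicAverage (w s) n with hT
  have hTr : Tendsto (fun n => c r - T n (c r)) atTop (𝓝 (c r)) := by
    simpa [hT] using tendsto_const_nhds.sub hr
  have hTs : Tendsto (fun n => c s - T n (c s)) atTop (𝓝 (c s)) := by
    simpa [hT] using tendsto_const_nhds.sub hs
  have hcob : ∀ᶠ n in atTop, inner ℂ (w r (c s - T n (c s))) (c r - T n (c r))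
      = inner ℂ (w s (c r - T n (c r))) (c s - T n (c s)) := by
    filter_upwards [eventually_ne_atTop 0] with n hn
    obtain ⟨F, hF⟩ := exists_coboundary_sub_ergodicAverage_mul hccoc hcomm r s hn
    rw [hF r, hF s]
    exact inner_coboundary_symm (hunit r) (hunit s) (hcomm r s) F
  exact tendsto_nhds_unique ((((w r).continuous.tendsto _).comp hTs).inner hTr |>.congr' hcob)
    ((((w s).continuous.tendsto _).comp hTr).inner hTs)

/-- Let `(w, K)` be a strongly continuous unitary representation of a real Hilbert space
`G` (as an additive group) on a complex Hilbert space `K` containing no nonzero invariant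
vector, and `c : G → K` a continuous 1-cocycle (`c(r+s) = c(r) + w(r)c(s)`).  Then for all
`r, s`: `⟨c(r), w(r)c(s)⟩ = ⟨c(s), w(s)c(r)⟩` (inner products written here in the
Mathlib convention, conjugate-linear in the first variable). -/
theorem cocycle_symmetry
    {G : Type*} [NormedAddCommGroup G] [InnerProductSpace ℝ G] [CompleteSpace G]
    {K : Type*} [NormedAddCommGroup K] [InnerProductSpace ℂ K] [CompleteSpace K]
    (w : G → K →L[ℂ] K)
    (hw0 : w 0 = 1)
    (hwadd : ∀ r s : G, w (r + s) = w r ∘L w s)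
    (hwunitary : ∀ r : G, (adjoint (w r)) ∘L w r = 1 ∧ w r ∘L (adjoint (w r)) = 1)
    (hwcont : ∀ f : K, Continuous fun r => w r f)
    (hnotriv : ∀ f : K, (∀ r : G, w r f = f) → f = 0)
    (c : G → K) (hccont : Continuous c)
    (hccoc : ∀ r s : G, c (r + s) = c r + w r (c s)) :
    ∀ r s : G, (inner ℂ (w r (c s)) (c r) : ℂ) = inner ℂ (w s (c r)) (c s) :=
  cocycle_symmetry_general w hwadd hwunitary hnotriv c hccoc
end

section
/- Let ℋ be a real Hilbert space, K a complex Hilbert space, and ξ, η: ℋ → K bounded real-linear maps satisfying ⟨p1, p2⟩ = Im⟨η(p2), ξ(p1)⟩ for all p1, p2 ∈ ℋ. Then ξ and η are injective, ‖p‖ ≤ ‖η‖·‖ξ(p)‖ and ‖p‖ ≤ ‖ξ‖·‖η(p)‖ for all p ∈ ℋ, and the ranges of ξ and η are closed. -/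
/-!
Taking `p₁ = p₂ = p` in the pairing identity gives `‖p‖² = Im ⟪ξ p, η p⟫ ≤ ‖ξ p‖ ‖η p‖`.
Bounding one factor by the operator norm and cancelling `‖p‖` shows that `ξ` and `η` are
bounded below, i.e. antilipschitz; an antilipschitz map on a complete space is injective
and has closed range.
-/

open scoped InnerProductSpace

theorem sq_norm_le_norm_mul_norm_of_inner_self_eq_im
    {H : Type*} [SeminormedAddCommGroup H] [InnerProductSpace ℝ H]
    {K : Type*} [SeminormedAddCommGroup K] [InnerProductSpace ℂ K]
    {f g : H → K} (h : ∀ p, ⟪p, p⟫_ℝ = (⟪f p, g p⟫_ℂ).im) (p : H) :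
    ‖p‖ ^ 2 ≤ ‖f p‖ * ‖g p‖ :=
  calc ‖p‖ ^ 2 = (⟪f p, g p⟫_ℂ).im := by rw [← h p, real_inner_self_eq_norm_sq]
    _ ≤ ‖⟪f p, g p⟫_ℂ‖ := Complex.im_le_norm _
    _ ≤ ‖f p‖ * ‖g p‖ := norm_inner_le_norm _ _

theorem norm_le_opNorm_mul_of_sq_norm_le
    {𝕜 : Type*} [NontriviallyNormedField 𝕜]
    {E F G : Type*} [SeminormedAddCommGroup E] [NormedSpace 𝕜 E]
    [SeminormedAddCommGroup F] [SeminormedAddCommGroup G] [NormedSpace 𝕜 G]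
    {f : E → F} (g : E →L[𝕜] G) {p : E} (h : ‖p‖ ^ 2 ≤ ‖f p‖ * ‖g p‖) :
    ‖p‖ ≤ ‖g‖ * ‖f p‖ := by
  rcases (norm_nonneg p).eq_or_lt with hp | hp
  · rw [← hp]
    positivity
  refine le_of_mul_le_mul_right ?_ hp
  calc ‖p‖ * ‖p‖ = ‖p‖ ^ 2 := (sq _).symm
    _ ≤ ‖f p‖ * ‖g p‖ := h
    _ ≤ ‖f p‖ * (‖g‖ * ‖p‖) := by gcongr; exact g.le_opNorm p
    _ = ‖g‖ * ‖f p‖ * ‖p‖ := by ring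

theorem pairing_injective_closed_range_general
    {H : Type*} [NormedAddCommGroup H] [InnerProductSpace ℝ H] [CompleteSpace H]
    {K : Type*} [NormedAddCommGroup K] [InnerProductSpace ℂ K]
    (ξ η : H →L[ℝ] K)
    (hpair : ∀ p₁ p₂ : H, (inner ℝ p₁ p₂ : ℝ) = (inner ℂ (ξ p₁) (η p₂) : ℂ).im) :
    Function.Injective ξ ∧ Function.Injective η ∧
    (∀ p : H, ‖p‖ ≤ ‖η‖ * ‖ξ p‖) ∧ (∀ p : H, ‖p‖ ≤ ‖ξ‖ * ‖η p‖) ∧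
    IsClosed (Set.range ξ) ∧ IsClosed (Set.range η) := by
  have hsq := sq_norm_le_norm_mul_norm_of_inner_self_eq_im fun p ↦ hpair p p
  have hξ (p : H) : ‖p‖ ≤ ‖η‖ * ‖ξ p‖ := norm_le_opNorm_mul_of_sq_norm_le η (hsq p)
  have hη (p : H) : ‖p‖ ≤ ‖ξ‖ * ‖η p‖ :=
    norm_le_opNorm_mul_of_sq_norm_le ξ ((hsq p).trans_eq (mul_comm _ _))
  have aξ : AntilipschitzWith ‖η‖₊ ξ := AddMonoidHomClass.antilipschitz_of_bound ξ hξ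
  have aη : AntilipschitzWith ‖ξ‖₊ η := AddMonoidHomClass.antilipschitz_of_bound η hη
  exact ⟨aξ.injective, aη.injective, hξ, hη,
    aξ.isClosed_range ξ.uniformContinuous, aη.isClosed_range η.uniformContinuous⟩

/-- Let `ℋ` be a real Hilbert space, `K` a complex Hilbert space, and `ξ, η : ℋ → K`
bounded real-linear maps with `⟨p₁, p₂⟩ = Im⟨η(p₂), ξ(p₁)⟩` (paper convention; in
Mathlib's convention `⟨p₁,p₂⟩ = Im ⟪ξ p₁, η p₂⟫`).  Then `ξ` and `η` are injective,
`‖p‖ ≤ ‖η‖·‖ξ p‖`, `‖p‖ ≤ ‖ξ‖·‖η p‖`, and the ranges of `ξ` and `η` are closed. -/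
theorem pairing_injective_closed_range
    {H : Type*} [NormedAddCommGroup H] [InnerProductSpace ℝ H] [CompleteSpace H]
    {K : Type*} [NormedAddCommGroup K] [InnerProductSpace ℂ K] [CompleteSpace K]
    (ξ η : H →L[ℝ] K)
    (hpair : ∀ p₁ p₂ : H, (inner ℝ p₁ p₂ : ℝ) = (inner ℂ (ξ p₁) (η p₂) : ℂ).im) :
    Function.Injective ξ ∧ Function.Injective η ∧
    (∀ p : H, ‖p‖ ≤ ‖η‖ * ‖ξ p‖) ∧ (∀ p : H, ‖p‖ ≤ ‖ξ‖ * ‖η p‖) ∧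
    IsClosed (Set.range ξ) ∧ IsClosed (Set.range η) :=
  pairing_injective_closed_range_general ξ η hpair
end

section
/- Let w be a strongly continuous unitary representation of a real Hilbert space G (additive group) on a complex Hilbert space K without nonzero invariant vectors, and c: G → K a continuous 1-cocycle (c(r+s) = c(r) + w(r)c(s)). Fix r, s ∈ G and let G_0 = span{r, s}, K_0 = {f ∈ K : w(g)f = f for all g ∈ G_0}. Then the K_0-component c_0 of c (the orthogonal projection of c(g) onto K_0) vanishes on G_0: c_0(h) = 0 for all h ∈ G_0. -/
/-!
Because `G` is commutative, the cocycle identity gives `c g + w g (c h) = c h + w h (c g)`.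
Pairing with `f`, which is fixed by `w h` and hence by its adjoint, shows that `⟪c h, ·⟫` takes
the value `⟪c h, f⟫` on the whole orbit of `f`, hence on its closed convex hull. The point of
minimal norm of that hull is fixed by every `w g`: otherwise the midpoint of it and its image
would be shorter, by strict convexity of the norm. With no nonzero invariant vectors this point
is `0`, so `⟪c h, f⟫ = ⟪c h, 0⟫ = 0`.
-/

open ContinuousLinearMap Set

theorem Convex.exists_forall_isFixedPt_of_norm_map {E : Type*} [NormedAddCommGroup E]
    [InnerProductSpace ℝ E] [CompleteSpace E] {C : Set E} (hne : C.Nonempty)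
    (hconv : Convex ℝ C) (hclosed : IsClosed C) {ι : Type*} (T : ι → E → E)
    (hnorm : ∀ i x, ‖T i x‖ = ‖x‖) (hmaps : ∀ i, MapsTo (T i) C C) :
    ∃ v ∈ C, ∀ i, Function.IsFixedPt (T i) v := by
  obtain ⟨v, hvC, hvmin⟩ := exists_norm_eq_iInf_of_complete_convex hne hclosed.isComplete hconv 0
  have hle : ∀ x ∈ C, ‖v‖ ≤ ‖x‖ := fun x hx => by
    have := ciInf_le ⟨0, forall_mem_range.2 fun (y : C) => norm_nonneg (0 - (y : E))⟩ (⟨x, hx⟩ : C)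
    simp only [zero_sub, norm_neg] at hvmin this
    rwa [← hvmin] at this
  refine ⟨v, hvC, fun i => ?_⟩
  by_contra hmoved
  have hmid : (1 / 2 : ℝ) • (T i v + v) ∈ C := by
    simpa [smul_add] using hconv (hmaps i hvC) hvC (by norm_num) (by norm_num) (by norm_num)
  have hlt := (norm_midpoint_lt_iff (hnorm i v)).2 hmoved
  rw [hnorm] at hlt
  exact (hle _ hmid).not_gt hlt

theorem ContinuousLinearMap.mapsTo_closedConvexHull {E F : Type*} [AddCommGroup E] [Module ℝ E]
    [TopologicalSpace E] [AddCommGroup F] [Module ℝ F] [TopologicalSpace F]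
    (L : E →L[ℝ] F) {s : Set E} {t : Set F} (h : MapsTo L s t) :
    MapsTo L (closedConvexHull ℝ s) (closedConvexHull ℝ t) :=
  closedConvexHull_min (h.mono_right subset_closedConvexHull)
    (convex_closedConvexHull.linear_preimage L.toLinearMap)
    (isClosed_closedConvexHull.preimage L.continuous)

theorem zero_mem_closedConvexHull_orbit {E : Type*}
    [NormedAddCommGroup E] [InnerProductSpace ℝ E] [CompleteSpace E] {M : Type*} [Add M]
    [Nonempty M] (T : M → E →L[ℝ] E) (hadd : ∀ g g', T (g + g') = T g ∘L T g')
    (hnorm : ∀ g x, ‖T g x‖ = ‖x‖) (hfix : ∀ v, (∀ g, T g v = v) → v = 0) (f : E) :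
    (0 : E) ∈ closedConvexHull ℝ (range fun g => T g f) := by
  have hmaps : ∀ g, MapsTo (T g) (range fun g' => T g' f) (range fun g' => T g' f) := by
    rintro g _ ⟨g', rfl⟩
    exact ⟨g + g', by simp [hadd]⟩
  obtain ⟨v, hv, hvfix⟩ := convex_closedConvexHull.exists_forall_isFixedPt_of_norm_map
    ((range_nonempty _).mono subset_closedConvexHull) isClosed_closedConvexHull (fun g => T g)
    hnorm fun g => (T g).mapsTo_closedConvexHull (hmaps g)
  rwa [hfix v hvfix] at hv

theorem cocycle_add_comm {G K : Type*} [AddCommMagma G] [Add K] (w : G → K → K) (c : G → K)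
    (hc : ∀ r s, c (r + s) = c r + w r (c s)) (g h : G) :
    c g + w g (c h) = c h + w h (c g) := by
  rw [← hc, ← hc, add_comm]

section Unitary

variable {G 𝕜 K : Type*} [RCLike 𝕜] [NormedAddCommGroup K] [InnerProductSpace 𝕜 K]
  [CompleteSpace K]

theorem adjoint_eq_apply_neg [AddGroup G] (w : G → K →L[𝕜] K) (hw0 : w 0 = 1)
    (hwadd : ∀ r s, w (r + s) = w r ∘L w s) (hisom : ∀ g, adjoint (w g) ∘L w g = 1) (g : G) :
    adjoint (w g) = w (-g) :=
  left_inv_eq_right_inv (hisom g) (by rw [mul_def, ← hwadd, add_neg_cancel, hw0])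

theorem inner_cocycle_apply_eq [AddCommGroup G] (w : G → K →L[𝕜] K)
    (hadj : ∀ g, adjoint (w g) = w (-g)) (c : G → K) (hc : ∀ r s, c (r + s) = c r + w r (c s))
    {h : G} {f : K} (hf : w (-h) f = f) (g : G) :
    inner 𝕜 (c h) (w g f) = inner 𝕜 (c h) f := by
  have key := congrArg (fun x => inner 𝕜 x f) (cocycle_add_comm (fun g x => w g x) c hc (-g) h)
  simp only [inner_add_left] at key
  rw [← adjoint_inner_right (w h), hadj, hf] at key
  rw [← adjoint_inner_left, hadj]
  linear_combination key

end Unitary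

theorem cocycle_invariant_component_vanishes_general
    {G : Type*} [NormedAddCommGroup G] [InnerProductSpace ℝ G] [CompleteSpace G]
    {K : Type*} [NormedAddCommGroup K] [InnerProductSpace ℂ K] [CompleteSpace K]
    (w : G → K →L[ℂ] K)
    (hw0 : w 0 = 1)
    (hwadd : ∀ r s : G, w (r + s) = w r ∘L w s)
    (hwunitary : ∀ r : G, (adjoint (w r)) ∘L w r = 1 ∧ w r ∘L (adjoint (w r)) = 1)
    (hnotriv : ∀ f : K, (∀ r : G, w r f = f) → f = 0)
    (c : G → K)
    (hccoc : ∀ r s : G, c (r + s) = c r + w r (c s)) :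
    ∀ r s : G, ∀ h ∈ Submodule.span ℝ ({r, s} : Set G),
      ∀ f : K, (∀ g ∈ Submodule.span ℝ ({r, s} : Set G), w g f = f) →
        (inner ℂ (c h) f : ℂ) = 0 := by
  intro r s h hh f hf
  let _ : InnerProductSpace ℝ K := InnerProductSpace.complexToReal
  have hadj := adjoint_eq_apply_neg w hw0 hwadd fun g => (hwunitary g).1
  have horbit : (0 : K) ∈ closedConvexHull ℝ (range fun g => w g f) :=
    zero_mem_closedConvexHull_orbit
      (fun g => (w g).restrictScalars ℝ) (fun g g' => by ext; simp [hwadd])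
      (fun g => (w g).norm_map_iff_adjoint_comp_self.2 (hwunitary g).1) hnotriv f
  have hconst : closedConvexHull ℝ (range fun g => w g f) ⊆
      (innerSL ℂ (c h)).restrictScalars ℝ ⁻¹' {inner ℂ (c h) f} :=
    closedConvexHull_min
      (range_subset_iff.2 (inner_cocycle_apply_eq w hadj c hccoc (hf (-h) (neg_mem hh))))
      ((convex_singleton _).linear_preimage _)
      (isClosed_singleton.preimage (ContinuousLinearMap.continuous _))
  simpa using (hconst horbit).symm

/-- Let `w` be a strongly continuous unitary representation of a real Hilbert space `G`
(additive group) on a complex Hilbert space `K` with no nonzero invariant vectors, and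
`c : G → K` a continuous 1-cocycle.  Fix `r, s ∈ G`, let `G₀ = span_ℝ{r,s}` and
`K₀ = {f : w(g)f = f for all g ∈ G₀}`.  Then the `K₀`-component of `c` vanishes on `G₀`:
for every `h ∈ G₀`, `c(h)` is orthogonal to `K₀` (i.e. the orthogonal projection of
`c(h)` onto `K₀` is zero). -/
theorem cocycle_invariant_component_vanishes
    {G : Type*} [NormedAddCommGroup G] [InnerProductSpace ℝ G] [CompleteSpace G]
    {K : Type*} [NormedAddCommGroup K] [InnerProductSpace ℂ K] [CompleteSpace K]
    (w : G → K →L[ℂ] K)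
    (hw0 : w 0 = 1)
    (hwadd : ∀ r s : G, w (r + s) = w r ∘L w s)
    (hwunitary : ∀ r : G, (adjoint (w r)) ∘L w r = 1 ∧ w r ∘L (adjoint (w r)) = 1)
    (hwcont : ∀ f : K, Continuous fun r => w r f)
    (hnotriv : ∀ f : K, (∀ r : G, w r f = f) → f = 0)
    (c : G → K) (hccont : Continuous c)
    (hccoc : ∀ r s : G, c (r + s) = c r + w r (c s)) :
    ∀ r s : G, ∀ h ∈ Submodule.span ℝ ({r, s} : Set G),
      ∀ f : K, (∀ g ∈ Submodule.span ℝ ({r, s} : Set G), w g f = f) →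
        (inner ℂ (c h) f : ℂ) = 0 :=
  cocycle_invariant_component_vanishes_general w hw0 hwadd hwunitary hnotriv c hccoc
end
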